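/- Define S_{C1,C2}(x) = Σ_{m,n≥0} q^{4·C(m+1,2)+2·C(n+1,2)+2mn+C1·m+C2·n} x^{2m+n} / ((q;q)_m (q;q)_n). Then S_{−1,−1}(x) − S_{0,0}(x) = xq S_{−1,−1}(xq). -/

import Mathlib

noncomputable section

/-- Base coefficient ring: formal Laurent series over ℚ (a field), so that
integer powers of `q` and inverses of Pochhammer symbols make sense. -/
abbrev R : Type := LaurentSeries ℚ

/-- The formal variable `q`. -/
def q : R := HahnSeries.single 1 1

/-- The finite q-Pochhammer symbol `(a; b)_n = ∏_{j=1}^n (1 - a b^(j-1))`. -/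
def poch (a b : R) (n : ℕ) : R := ∏ j ∈ Finset.range n, (1 - a * b ^ j)

/-- Formal substitution `x ↦ c·x` in a power series in `x` over `R`. -/
def subst (c : R) (f : PowerSeries R) : PowerSeries R :=
  PowerSeries.mk fun k => c ^ k * PowerSeries.coeff k f

/-- The Andrews–Gordon (k=3) double series
`S_{C1,C2}(x) = Σ_{m,n} q^{4C(m+1,2)+2C(n+1,2)+2mn+C1 m+C2 n} x^{2m+n}/((q;q)_m (q;q)_n)`,
as a power series in `x` over `R`. -/
def S (C1 C2 : ℤ) : PowerSeries R :=
  PowerSeries.mk fun k =>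
    ∑ p ∈ (Finset.range (k+1) ×ˢ Finset.range (k+1)).filter
        (fun p => 2 * p.1 + p.2 = k),
      q ^ (4 * ((p.1+1).choose 2 : ℤ) + 2 * ((p.2+1).choose 2 : ℤ)
            + 2 * (p.1 : ℤ) * (p.2 : ℤ) + C1 * (p.1 : ℤ) + C2 * (p.2 : ℤ))
        * (poch q q p.1)⁻¹ * (poch q q p.2)⁻¹

/-!
Write `S_{C1,C2}(x) = ∑ t_{C1,C2}(m,n) x^(2m+n)` and `t = t_{-1,-1}`. Since
`t_{0,0}(m,n) = q^(m+n) t(m,n)`, the left side has coefficients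
`(1 - q^(m+n)) t(m,n) = (1 - q^n) t(m,n) + q^n (1 - q^m) t(m,n)`.
The factor `1 - q^n` (resp. `1 - q^m`) cancels the last factor of `(q;q)_n` (resp. `(q;q)_m`),
so the two pieces are `x` and `x²` times double series of the same shape, and the ratio
recursions of `t` in `m` and in `n` recombine them into `x q S_{-1,-1}(xq)`.
-/

open PowerSeries hiding subst
open Finset

def weightedAntidiagonal (k : ℕ) : Finset (ℕ × ℕ) :=
  (range (k+1) ×ˢ range (k+1)).filter fun p => 2 * p.1 + p.2 = k

@[simp]
lemma mem_weightedAntidiagonal {k : ℕ} {p : ℕ × ℕ} :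
    p ∈ weightedAntidiagonal k ↔ 2 * p.1 + p.2 = k := by
  simp only [weightedAntidiagonal, mem_filter, mem_product, mem_range]
  omega

section DoubleSeries

variable {A : Type*}

/-- `∑ c m n X^(2m+n)` over all `m n : ℕ`. -/
def doubleSeries [Semiring A] (c : ℕ → ℕ → A) : PowerSeries A :=
  PowerSeries.mk fun k => ∑ p ∈ weightedAntidiagonal k, c p.1 p.2

lemma coeff_doubleSeries [Semiring A] (c : ℕ → ℕ → A) (k : ℕ) :
    coeff k (doubleSeries c) = ∑ p ∈ weightedAntidiagonal k, c p.1 p.2 :=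
  coeff_mk _ _

lemma doubleSeries_add [Semiring A] (c d : ℕ → ℕ → A) :
    doubleSeries (fun m n => c m n + d m n) = doubleSeries c + doubleSeries d := by
  ext k : 1
  simp only [coeff_doubleSeries, map_add, sum_add_distrib]

lemma doubleSeries_sub [Ring A] (c d : ℕ → ℕ → A) :
    doubleSeries (fun m n => c m n - d m n) = doubleSeries c - doubleSeries d := by
  ext k : 1
  simp only [coeff_doubleSeries, map_sub, sum_sub_distrib]

lemma C_mul_doubleSeries [Semiring A] (a : A) (c : ℕ → ℕ → A) :
    C a * doubleSeries c = doubleSeries fun m n => a * c m n := by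
  ext k : 1
  simp only [coeff_C_mul, coeff_doubleSeries, mul_sum]

lemma doubleSeries_eq_X_mul [Semiring A] {f : ℕ → ℕ → A} (hf : ∀ m, f m 0 = 0) :
    doubleSeries f = X * doubleSeries fun m n => f m (n + 1) := by
  ext k : 1
  rw [coeff_doubleSeries]
  cases k with
  | zero =>
    rw [coeff_zero_X_mul]
    refine sum_eq_zero fun p hp => ?_
    obtain ⟨m, n⟩ := p
    obtain rfl : n = 0 := by rw [mem_weightedAntidiagonal] at hp; omega
    exact hf m
  | succ k =>
    rw [coeff_succ_X_mul, coeff_doubleSeries]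
    refine (sum_of_injOn (fun p : ℕ × ℕ => (p.1, p.2 + 1)) ?_ ?_ ?_ fun p _ => rfl).symm
    · intro p _ p' _ h
      simp_all [Prod.ext_iff]
    · intro p hp
      simp only [mem_coe, mem_weightedAntidiagonal] at hp ⊢
      omega
    · rintro ⟨m, _ | n⟩ hp hnot
      · exact hf m
      · refine absurd ⟨(m, n), ?_, rfl⟩ hnot
        simp only [mem_coe, mem_weightedAntidiagonal] at hp ⊢
        omega

lemma doubleSeries_eq_X_sq_mul [Semiring A] {f : ℕ → ℕ → A} (hf : ∀ n, f 0 n = 0) :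
    doubleSeries f = X ^ 2 * doubleSeries fun m n => f (m + 1) n := by
  ext k : 1
  rw [coeff_doubleSeries]
  rcases Nat.lt_or_ge k 2 with hk | hk
  · rw [coeff_X_pow_mul', if_neg (by omega)]
    refine sum_eq_zero fun p hp => ?_
    obtain ⟨m, n⟩ := p
    obtain rfl : m = 0 := by rw [mem_weightedAntidiagonal] at hp; omega
    exact hf n
  · obtain ⟨k, rfl⟩ := Nat.exists_eq_add_of_le' hk
    rw [coeff_X_pow_mul, coeff_doubleSeries]
    refine (sum_of_injOn (fun p : ℕ × ℕ => (p.1 + 1, p.2)) ?_ ?_ ?_ fun p _ => rfl).symm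
    · intro p _ p' _ h
      simp_all [Prod.ext_iff]
    · intro p hp
      simp only [mem_coe, mem_weightedAntidiagonal] at hp ⊢
      omega
    · rintro ⟨_ | m, n⟩ hp hnot
      · exact hf n
      · refine absurd ⟨(m, n), ?_, rfl⟩ hnot
        simp only [mem_coe, mem_weightedAntidiagonal] at hp ⊢
        omega

end DoubleSeries

lemma subst_doubleSeries (a : R) (c : ℕ → ℕ → R) :
    subst a (doubleSeries c) = doubleSeries fun m n => a ^ (2 * m + n) * c m n := by
  ext k : 1
  simp only [subst, coeff_mk, coeff_doubleSeries, mul_sum]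
  refine sum_congr rfl fun p hp => ?_
  rw [mem_weightedAntidiagonal.mp hp]

lemma q_ne_zero : q ≠ 0 := by
  simp [q]

lemma one_sub_q_pow_succ_ne_zero (n : ℕ) : 1 - q ^ (n + 1) ≠ 0 := by
  intro h
  have := congrArg (fun f : R => f.coeff 0) h
  simp [q, HahnSeries.single_pow, show (0 : ℤ) ≠ n + 1 by omega] at this

lemma poch_succ (a b : R) (n : ℕ) : poch a b (n + 1) = poch a b n * (1 - a * b ^ n) :=
  prod_range_succ _ _

lemma one_sub_q_pow_succ_mul_inv_poch_succ (n : ℕ) :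
    (1 - q ^ (n + 1)) * (poch q q (n + 1))⁻¹ = (poch q q n)⁻¹ := by
  rw [poch_succ, ← pow_succ', mul_inv, mul_left_comm,
    mul_inv_cancel₀ (one_sub_q_pow_succ_ne_zero n), mul_one]

def agExp (C1 C2 : ℤ) (m n : ℕ) : ℤ :=
  4 * ((m+1).choose 2 : ℤ) + 2 * ((n+1).choose 2 : ℤ)
    + 2 * (m : ℤ) * (n : ℤ) + C1 * (m : ℤ) + C2 * (n : ℤ)

def agTerm (C1 C2 : ℤ) (m n : ℕ) : R :=
  q ^ agExp C1 C2 m n * (poch q q m)⁻¹ * (poch q q n)⁻¹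

lemma S_eq_doubleSeries (C1 C2 : ℤ) : S C1 C2 = doubleSeries (agTerm C1 C2) := rfl

lemma choose_succ_two_succ (n : ℕ) : ((n + 2).choose 2 : ℤ) = (n + 1).choose 2 + (n + 1) := by
  rw [Nat.choose_succ_succ', Nat.choose_one_right]
  push_cast
  ring

lemma agExp_add (C1 C2 a b : ℤ) (m n : ℕ) :
    agExp (C1 + a) (C2 + b) m n = a * m + b * n + agExp C1 C2 m n := by
  simp only [agExp]
  ring

lemma agExp_succ_fst (C1 C2 : ℤ) (m n : ℕ) :
    agExp C1 C2 (m + 1) n = 4 * m + 2 * n + 4 + C1 + agExp C1 C2 m n := by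
  simp only [agExp, choose_succ_two_succ]
  push_cast
  ring

lemma agExp_succ_snd (C1 C2 : ℤ) (m n : ℕ) :
    agExp C1 C2 m (n + 1) = 2 * m + 2 * n + 2 + C2 + agExp C1 C2 m n := by
  simp only [agExp, choose_succ_two_succ]
  push_cast
  ring

lemma agTerm_add (C1 C2 a b : ℤ) (m n : ℕ) :
    agTerm (C1 + a) (C2 + b) m n = q ^ (a * m + b * n) * agTerm C1 C2 m n := by
  simp only [agTerm, agExp_add, zpow_add₀ q_ne_zero]
  ring

lemma one_sub_mul_agTerm_succ_fst (C1 C2 : ℤ) (m n : ℕ) :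
    (1 - q ^ (m + 1)) * agTerm C1 C2 (m + 1) n
      = q ^ (4 * (m : ℤ) + 2 * n + 4 + C1) * agTerm C1 C2 m n := by
  rw [agTerm, agTerm, agExp_succ_fst, zpow_add₀ q_ne_zero]
  linear_combination (q ^ (4 * (m : ℤ) + 2 * n + 4 + C1) * q ^ agExp C1 C2 m n
    * (poch q q n)⁻¹) * one_sub_q_pow_succ_mul_inv_poch_succ m

lemma one_sub_mul_agTerm_succ_snd (C1 C2 : ℤ) (m n : ℕ) :
    (1 - q ^ (n + 1)) * agTerm C1 C2 m (n + 1)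
      = q ^ (2 * (m : ℤ) + 2 * n + 2 + C2) * agTerm C1 C2 m n := by
  rw [agTerm, agTerm, agExp_succ_snd, zpow_add₀ q_ne_zero]
  linear_combination (q ^ (2 * (m : ℤ) + 2 * n + 2 + C2) * q ^ agExp C1 C2 m n
    * (poch q q m)⁻¹) * one_sub_q_pow_succ_mul_inv_poch_succ n

lemma functional_equation_of_recursions (T : ℕ → ℕ → R)
    (hfst : ∀ m n, (1 - q ^ (m + 1)) * T (m + 1) n = q ^ (4 * m + 2 * n + 3) * T m n)
    (hsnd : ∀ m n, (1 - q ^ (n + 1)) * T m (n + 1) = q ^ (2 * m + 2 * n + 1) * T m n) :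
    doubleSeries (fun m n => (1 - q ^ (m + n)) * T m n)
      = X * C q * subst q (doubleSeries T) := by
  calc doubleSeries (fun m n => (1 - q ^ (m + n)) * T m n)
      = doubleSeries (fun m n => (1 - q ^ n) * T m n)
          + doubleSeries (fun m n => q ^ n * ((1 - q ^ m) * T m n)) := by
        rw [← doubleSeries_add]
        congr; funext m n; ring
    _ = X * doubleSeries (fun m n => (1 - q ^ (n + 1)) * T m (n + 1))
          + X ^ 2 * doubleSeries (fun m n => q ^ n * ((1 - q ^ (m + 1)) * T (m + 1) n)) := by
        rw [doubleSeries_eq_X_mul (f := fun m n => (1 - q ^ n) * T m n) (by simp),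
          doubleSeries_eq_X_sq_mul (f := fun m n => q ^ n * ((1 - q ^ m) * T m n)) (by simp)]
    _ = X * doubleSeries (fun m n => q ^ (2 * m + 2 * n + 1) * T m n)
          + X ^ 2 * doubleSeries
              (fun m n => q ^ (2 * m + (n + 1) + 1) * ((1 - q ^ (n + 1)) * T m (n + 1))) := by
        -- both `x²`-summands are `q^(4m+3n+3) T m n`
        simp only [hsnd, hfst]
        congr 3; funext m n; ring
    _ = X * (doubleSeries (fun m n => q ^ (2 * m + 2 * n + 1) * T m n)
          + doubleSeries (fun m n => q ^ (2 * m + n + 1) * ((1 - q ^ n) * T m n))) := by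
        rw [doubleSeries_eq_X_mul (f := fun m n => q ^ (2 * m + n + 1) * ((1 - q ^ n) * T m n))
          (by simp)]
        ring
    _ = X * doubleSeries (fun m n => q * (q ^ (2 * m + n) * T m n)) := by
        rw [← doubleSeries_add]
        congr; funext m n; ring
    _ = X * C q * subst q (doubleSeries T) := by
        rw [mul_assoc, subst_doubleSeries, C_mul_doubleSeries]

theorem andrews_second_equation :
    S (-1) (-1) - S 0 0
      = PowerSeries.X * PowerSeries.C q * subst q (S (-1) (-1)) := by
  have h00 (m n : ℕ) : agTerm 0 0 m n = q ^ (m + n) * agTerm (-1) (-1) m n := by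
    have := agTerm_add (-1) (-1) 1 1 m n
    rw [neg_add_cancel, one_mul, one_mul] at this
    rw [this, ← zpow_natCast]
    push_cast
    ring_nf
  have hfst (m n : ℕ) : (1 - q ^ (m + 1)) * agTerm (-1) (-1) (m + 1) n
      = q ^ (4 * m + 2 * n + 3) * agTerm (-1) (-1) m n := by
    rw [one_sub_mul_agTerm_succ_fst, ← zpow_natCast]
    push_cast
    ring_nf
  have hsnd (m n : ℕ) : (1 - q ^ (n + 1)) * agTerm (-1) (-1) m (n + 1)
      = q ^ (2 * m + 2 * n + 1) * agTerm (-1) (-1) m n := by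
    rw [one_sub_mul_agTerm_succ_snd, ← zpow_natCast]
    push_cast
    ring_nf
  rw [S_eq_doubleSeries, S_eq_doubleSeries, ← doubleSeries_sub,
    ← functional_equation_of_recursions _ hfst hsnd]
  congr; funext m n; rw [h00]; ring

end
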